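/- Frobenius-norm residual bound for low-rank matrix perturbation. Let X, Z ∈ ℝ^{m×n}, Y = X + Z, and suppose rank(X) ≤ r. Let Û ∈ ℝ^{m×r} satisfy ÛᵀÛ = I_r, let Û_⊥ ∈ ℝ^{m×(m−r)} satisfy Û_⊥ᵀÛ_⊥ = I_{m−r} and ÛᵀÛ_⊥ = 0, and assume ‖Û_⊥ᵀ Y‖_F ≤ ‖Y − B‖_F for every matrix B ∈ ℝ^{m×n} with rank(B) ≤ r (this holds in particular when the columns of Û are leading r left singular vectors of Y). Then ‖Û_⊥ᵀ X‖_F ≤ 2‖Z‖_F. -/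

import Mathlib

/-!
Since `rank X ≤ r`, the hypothesis applied to `B = X` gives `‖Û_⊥ᵀ Y‖_F ≤ ‖Z‖_F`. Multiplication by
`Û_⊥ᵀ` does not increase the Frobenius norm, because `Û_⊥ Û_⊥ᵀ` is an orthogonal projection, so
`‖Û_⊥ᵀ X‖_F ≤ ‖Û_⊥ᵀ Y‖_F + ‖Û_⊥ᵀ Z‖_F ≤ 2 ‖Z‖_F`.
-/

open Matrix BigOperators

noncomputable section

/-- Squared Frobenius norm of a matrix. -/
def mfrobSq {ι κ : Type*} [Fintype ι] [Fintype κ] (A : Matrix ι κ ℝ) : ℝ :=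
  ∑ i, ∑ j, A i j ^ 2

/-- Frobenius norm of a matrix. -/
def mfrob {ι κ : Type*} [Fintype ι] [Fintype κ] (A : Matrix ι κ ℝ) : ℝ :=
  Real.sqrt (mfrobSq A)

attribute [local instance] Matrix.frobeniusSeminormedAddCommGroup

section Frobenius

variable {ι κ μ : Type*} [Fintype ι] [Fintype κ] [Fintype μ]

lemma mfrob_eq_norm (A : Matrix ι κ ℝ) : mfrob A = ‖A‖ := by
  rw [frobenius_norm_def, mfrob, mfrobSq, Real.sqrt_eq_rpow]
  congr 1
  refine Finset.sum_congr rfl fun i _ => Finset.sum_congr rfl fun j _ => ?_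
  rw [Real.norm_eq_abs, Real.rpow_two, sq_abs]

lemma mfrob_sub_le (A B : Matrix ι κ ℝ) : mfrob (A - B) ≤ mfrob A + mfrob B := by
  simpa only [mfrob_eq_norm] using norm_sub_le A B

lemma mfrobSq_nonneg (A : Matrix ι κ ℝ) : 0 ≤ mfrobSq A :=
  Finset.sum_nonneg fun _ _ => Finset.sum_nonneg fun _ _ => sq_nonneg _

lemma mfrobSq_eq_trace (A : Matrix ι κ ℝ) : mfrobSq A = (Aᵀ * A).trace := by
  simp only [mfrobSq, trace, diag_apply, mul_apply, transpose_apply, sq]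
  exact Finset.sum_comm

variable [DecidableEq ι] [DecidableEq μ]

lemma transpose_mul_self_one_sub_mul_transpose {W : Matrix ι μ ℝ} (hW : Wᵀ * W = 1) :
    (1 - W * Wᵀ)ᵀ * (1 - W * Wᵀ) = 1 - W * Wᵀ := by
  have hidem : W * Wᵀ * (W * Wᵀ) = W * Wᵀ := by
    rw [Matrix.mul_assoc, ← Matrix.mul_assoc Wᵀ, hW, Matrix.one_mul]
  rw [transpose_sub, transpose_one, transpose_mul, transpose_transpose, Matrix.sub_mul,
    Matrix.mul_sub, Matrix.mul_sub, hidem, Matrix.one_mul, Matrix.mul_one, Matrix.one_mul]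
  abel

lemma mfrobSq_transpose_mul_add_mfrobSq {W : Matrix ι μ ℝ} (hW : Wᵀ * W = 1)
    (Z : Matrix ι κ ℝ) :
    mfrobSq (Wᵀ * Z) + mfrobSq ((1 - W * Wᵀ) * Z) = mfrobSq Z := by
  have hQ : ((1 - W * Wᵀ) * Z)ᵀ * ((1 - W * Wᵀ) * Z) = Zᵀ * Z - (Wᵀ * Z)ᵀ * (Wᵀ * Z) := by
    rw [transpose_mul _ Z, Matrix.mul_assoc, ← Matrix.mul_assoc _ _ Z,
      transpose_mul_self_one_sub_mul_transpose hW, transpose_mul, transpose_transpose,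
      Matrix.sub_mul, Matrix.one_mul, Matrix.mul_sub, Matrix.mul_assoc, Matrix.mul_assoc]
  rw [mfrobSq_eq_trace, mfrobSq_eq_trace, mfrobSq_eq_trace, hQ, trace_sub]
  ring

lemma mfrob_transpose_mul_le {W : Matrix ι μ ℝ} (hW : Wᵀ * W = 1) (Z : Matrix ι κ ℝ) :
    mfrob (Wᵀ * Z) ≤ mfrob Z := by
  apply Real.sqrt_le_sqrt
  linarith [mfrobSq_transpose_mul_add_mfrobSq hW Z, mfrobSq_nonneg ((1 - W * Wᵀ) * Z)]

end Frobenius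

theorem low_rank_perturbation_residual_frobenius_general
    (m n r : ℕ) (X Z : Matrix (Fin m) (Fin n) ℝ) (hrank : X.rank ≤ r)
    (Uhatperp : Matrix (Fin m) (Fin (m - r)) ℝ)
    (hUhatperp : Uhatperpᵀ * Uhatperp = 1)
    (hlead : ∀ B : Matrix (Fin m) (Fin n) ℝ, B.rank ≤ r →
      mfrob (Uhatperpᵀ * (X + Z)) ≤ mfrob (X + Z - B)) :
    mfrob (Uhatperpᵀ * X) ≤ 2 * mfrob Z := by
  have hY : mfrob (Uhatperpᵀ * (X + Z)) ≤ mfrob Z := by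
    simpa only [add_sub_cancel_left] using hlead X hrank
  have hX : Uhatperpᵀ * X = Uhatperpᵀ * (X + Z) - Uhatperpᵀ * Z := by
    rw [Matrix.mul_add, add_sub_cancel_right]
  calc mfrob (Uhatperpᵀ * X)
      ≤ mfrob (Uhatperpᵀ * (X + Z)) + mfrob (Uhatperpᵀ * Z) := hX ▸ mfrob_sub_le _ _
    _ ≤ 2 * mfrob Z := by linarith [mfrob_transpose_mul_le hUhatperp Z]

/-- Frobenius-norm residual bound for low-rank matrix perturbation
(second part of Lemma 6 of Zhang–Han, 2018): `‖Û_⊥ᵀ X‖_F ≤ 2‖Z‖_F`. -/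
theorem low_rank_perturbation_residual_frobenius
    (m n r : ℕ) (X Z : Matrix (Fin m) (Fin n) ℝ) (hrank : X.rank ≤ r)
    (Uhat : Matrix (Fin m) (Fin r) ℝ) (Uhatperp : Matrix (Fin m) (Fin (m - r)) ℝ)
    (hUhat : Uhatᵀ * Uhat = 1) (hUhatperp : Uhatperpᵀ * Uhatperp = 1)
    (hUhato : Uhatᵀ * Uhatperp = 0)
    (hlead : ∀ B : Matrix (Fin m) (Fin n) ℝ, B.rank ≤ r →
      mfrob (Uhatperpᵀ * (X + Z)) ≤ mfrob (X + Z - B)) :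
    mfrob (Uhatperpᵀ * X) ≤ 2 * mfrob Z :=
  low_rank_perturbation_residual_frobenius_general m n r X Z hrank Uhatperp hUhatperp hlead

end
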